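/- For every N ≥ 1, a > 0 and b ∈ ℝ, the partition function Z_N = Σ_{D ∈ 𝒟_N} N^{−|D|} exp(N(a m_N(D)²/2 + b m_N(D))) admits the integral representation Z_N = (N√a/(2π)) ∬_{ℝ²} Φ(x,y)^N dx dy, where Φ(x,y) = (x + e^{ay+b}) exp(−x²/2 − a y²/2). -/

import Mathlib

open MeasureTheory Real

/-- `D` is a monomer-dimer configuration on `Fin N`: a set of non-loop edges
(pairs of distinct vertices) that are pairwise disjoint, i.e. a partition into
pairs of a subset of the vertex set. -/
def IsMDConfig (N : ℕ) (D : Finset (Sym2 (Fin N))) : Prop :=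
  (∀ e ∈ D, ¬ e.IsDiag) ∧
    ∀ e ∈ D, ∀ f ∈ D, e ≠ f → ∀ v : Fin N, v ∈ e → v ∉ f

/-- The monomer density of a configuration. -/
noncomputable def monomerDensity (N : ℕ) (D : Finset (Sym2 (Fin N))) : ℝ :=
  ((N : ℝ) - 2 * D.card) / N

/-- The integrand of the two-dimensional integral representation. -/
noncomputable def Phi (a b x y : ℝ) : ℝ :=
  (x + Real.exp (a * y + b)) * Real.exp (-(x ^ 2 / 2) - a * y ^ 2 / 2)

/-!
Expand `Φ(x, y)^N` binomially: the term `x^j e^{(N-j)(ay+b)}` factorises, so by Fubini the double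
integral is a sum of products of one-dimensional Gaussian integrals. The `x`-integral is the
Gaussian moment `∫ x^j e^{-N x²/2}`, which vanishes for odd `j` and for `j = 2k` equals
`√(2π/N) (2k-1)‼ / N^k`; the `y`-integral is a shifted Gaussian. On the other side, the
configurations with `k` dimers number `C(N, 2k) (2k-1)‼` (choose the covered vertices, then a
perfect matching of them), and a configuration's weight depends only on its number of dimers, so
the two sums agree term by term.
-/

open Finset
open scoped Nat

namespace IsMDConfig

variable {N : ℕ} {D D' : Finset (Sym2 (Fin N))}

theorem mono (hD : IsMDConfig N D) (h : D' ⊆ D) : IsMDConfig N D' :=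
  ⟨fun e he => hD.1 e (h he), fun e he f hf => hD.2 e (h he) f (h hf)⟩

theorem insert {e : Sym2 (Fin N)} (hD : IsMDConfig N D) (he : ¬ e.IsDiag)
    (hdisj : ∀ f ∈ D, ∀ u ∈ e, u ∉ f) : IsMDConfig N (insert e D) := by
  refine ⟨fun f hf => ?_, fun f hf g hg hfg u hu => ?_⟩
  · rcases mem_insert.mp hf with rfl | hf
    exacts [he, hD.1 f hf]
  · rcases mem_insert.mp hf with rfl | hf' <;> rcases mem_insert.mp hg with rfl | hg'
    · exact absurd rfl hfg
    · exact hdisj g hg' u hu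
    · exact fun hu' => hdisj f hf' u hu' hu
    · exact hD.2 f hf' g hg' hfg u hu

theorem eq_of_mk_mem (hD : IsMDConfig N D) {v w w' : Fin N} (h : s(v, w) ∈ D)
    (h' : s(v, w') ∈ D) : w = w' := by
  by_contra hne
  exact hD.2 _ h _ h' (fun heq => hne (Sym2.congr_right.mp heq)) v (Sym2.mem_mk_left v w)
    (Sym2.mem_mk_left v w')

end IsMDConfig

section Count

variable {N : ℕ}

open Classical in
noncomputable def mdConfigsOn (V : Finset (Fin N)) (k : ℕ) : Finset (Finset (Sym2 (Fin N))) :=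
  (V.sym2.powersetCard k).filter (IsMDConfig N)

theorem mem_mdConfigsOn {V : Finset (Fin N)} {k : ℕ} {D : Finset (Sym2 (Fin N))} :
    D ∈ mdConfigsOn V k ↔ IsMDConfig N D ∧ #D = k ∧ ∀ e ∈ D, ∀ v ∈ e, v ∈ V := by
  simp only [mdConfigsOn, mem_filter, mem_powersetCard, subset_iff, mem_sym2_iff]
  tauto

variable {V : Finset (Fin N)} {k : ℕ} {v : Fin N}

theorem mdConfigsOn_zero : mdConfigsOn V 0 = {∅} := by
  ext D
  simp only [mem_mdConfigsOn, card_eq_zero, mem_singleton]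
  constructor
  · exact fun h => h.2.1
  · rintro rfl
    exact ⟨⟨by simp, by simp⟩, rfl, by simp⟩

theorem mdConfigsOn_empty_succ : mdConfigsOn (∅ : Finset (Fin N)) (k + 1) = ∅ := by
  simp [mdConfigsOn]

theorem filter_avoiding_mdConfigsOn :
    (mdConfigsOn V k).filter (fun D => ∀ e ∈ D, v ∉ e) = mdConfigsOn (V.erase v) k := by
  ext D
  simp only [mem_filter, mem_mdConfigsOn, mem_erase]
  constructor
  · rintro ⟨⟨hD, hk, hV⟩, hv⟩
    exact ⟨hD, hk, fun e he u hu => ⟨fun h => hv e he (h ▸ hu), hV e he u hu⟩⟩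
  · rintro ⟨hD, hk, hV⟩
    exact ⟨⟨hD, hk, fun e he u hu => (hV e he u hu).2⟩, fun e he hv => (hV e he v hv).1 rfl⟩

theorem insert_mem_mdConfigsOn {w : Fin N} {D : Finset (Sym2 (Fin N))} (hv : v ∈ V)
    (hw : w ∈ V.erase v) (hD : D ∈ mdConfigsOn ((V.erase v).erase w) k) :
    insert s(v, w) D ∈ mdConfigsOn V (k + 1) := by
  obtain ⟨hD, hk, hV⟩ := mem_mdConfigsOn.mp hD
  have hvw : v ≠ w := fun h => (mem_erase.mp hw).1 h.symm
  have hfree : ∀ f ∈ D, ∀ u ∈ s(v, w), u ∉ f := by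
    intro f hf u hu huf
    have := hV f hf u huf
    rcases Sym2.mem_iff.mp hu with rfl | rfl <;> simp_all
  refine mem_mdConfigsOn.mpr ⟨hD.insert (Sym2.mk_isDiag_iff.not.mpr hvw) hfree, ?_, ?_⟩
  · rw [card_insert_of_notMem fun h => hfree _ h v (Sym2.mem_mk_left v w) (Sym2.mem_mk_left v w),
      hk]
  · intro e he u hu
    rcases mem_insert.mp he with rfl | he
    · rcases Sym2.mem_iff.mp hu with rfl | rfl
      exacts [hv, mem_of_mem_erase hw]
    · exact mem_of_mem_erase (mem_of_mem_erase (hV e he u hu))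

theorem erase_mem_mdConfigsOn {w : Fin N} {D : Finset (Sym2 (Fin N))}
    (hD : D ∈ mdConfigsOn V (k + 1)) (h : s(v, w) ∈ D) :
    D.erase s(v, w) ∈ mdConfigsOn ((V.erase v).erase w) k := by
  obtain ⟨hD, hk, hV⟩ := mem_mdConfigsOn.mp hD
  refine mem_mdConfigsOn.mpr ⟨hD.mono (erase_subset _ _), by rw [card_erase_of_mem h, hk]; rfl, ?_⟩
  intro f hf u hu
  obtain ⟨hne, hf⟩ := mem_erase.mp hf
  have hu' := hD.2 f hf _ h hne u hu
  simp only [Sym2.mem_iff, not_or] at hu'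
  exact mem_erase.mpr ⟨hu'.2, mem_erase.mpr ⟨hu'.1, hV f hf u hu⟩⟩

theorem filter_covering_mdConfigsOn (hv : v ∈ V) :
    (mdConfigsOn V (k + 1)).filter (fun D => ¬ ∀ e ∈ D, v ∉ e) =
      (V.erase v).biUnion fun w =>
        (mdConfigsOn ((V.erase v).erase w) k).image (insert s(v, w)) := by
  ext D
  simp only [mem_filter, mem_biUnion, mem_image, not_forall, not_not]
  constructor
  · rintro ⟨hD, e, he, hve⟩
    obtain ⟨w, rfl⟩ := Sym2.mem_iff_exists.mp hve
    have hvw : v ≠ w := fun h => (mem_mdConfigsOn.mp hD).1.1 _ he (Sym2.mk_isDiag_iff.mpr h)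
    refine ⟨w, mem_erase.mpr ⟨Ne.symm hvw, (mem_mdConfigsOn.mp hD).2.2 _ he w
      (Sym2.mem_mk_right v w)⟩, D.erase s(v, w), erase_mem_mdConfigsOn hD he, insert_erase he⟩
  · rintro ⟨w, hw, D, hD, rfl⟩
    exact ⟨insert_mem_mdConfigsOn hv hw hD, s(v, w), mem_insert_self _ _, Sym2.mem_mk_left v w⟩

theorem card_mdConfigsOn_succ (hv : v ∈ V) :
    #(mdConfigsOn V (k + 1)) = #(mdConfigsOn (V.erase v) (k + 1)) +
      ∑ w ∈ V.erase v, #(mdConfigsOn ((V.erase v).erase w) k) := by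
  rw [← card_filter_add_card_filter_not (fun D => ∀ e ∈ D, v ∉ e), filter_avoiding_mdConfigsOn,
    filter_covering_mdConfigsOn hv, card_biUnion]
  · congr 1
    refine sum_congr rfl fun w hw => card_image_of_injOn fun D hD D' hD' h => ?_
    have hfree : ∀ D ∈ mdConfigsOn ((V.erase v).erase w) k, s(v, w) ∉ D := fun D hD h =>
      (mem_erase.mp (mem_of_mem_erase ((mem_mdConfigsOn.mp hD).2.2 _ h v
        (Sym2.mem_mk_left v w)))).1 rfl
    rw [← erase_insert (hfree D hD), ← erase_insert (hfree D' hD')]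
    exact congrArg (·.erase s(v, w)) h
  · intro w hw w' hw' hww'
    refine disjoint_left.mpr fun D hD hD' => hww' ?_
    obtain ⟨D₁, hD₁, rfl⟩ := mem_image.mp hD
    obtain ⟨D₂, hD₂, h⟩ := mem_image.mp hD'
    refine (mem_mdConfigsOn.mp (insert_mem_mdConfigsOn hv hw hD₁)).1.eq_of_mk_mem
      (mem_insert_self _ _) ?_
    exact h ▸ mem_insert_self _ _

theorem choose_mul_doubleFactorial_add_two (n k : ℕ) :
    (n + 2).choose (2 * k + 2) * (2 * k + 1)‼ =
      (n + 1).choose (2 * k + 2) * (2 * k + 1)‼ + (n + 1) * (n.choose (2 * k) * (2 * k - 1)‼) := by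
  rw [Nat.choose_succ_succ', Nat.doubleFactorial_add_one, ← Nat.mul_assoc (n + 1),
    Nat.add_one_mul_choose_eq]
  ring

theorem card_mdConfigsOn (V : Finset (Fin N)) (k : ℕ) :
    #(mdConfigsOn V k) = (#V).choose (2 * k) * (2 * k - 1)‼ := by
  induction h : #V using Nat.strong_induction_on generalizing V k with
  | _ n ih =>
  cases k with
  | zero => simp [mdConfigsOn_zero]
  | succ k =>
  obtain rfl | ⟨v, hv⟩ := V.eq_empty_or_nonempty
  · rw [mdConfigsOn_empty_succ, ← h, card_empty, card_empty, Nat.choose_eq_zero_of_lt (by omega),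
      zero_mul]
  obtain ⟨m, rfl⟩ : ∃ m, n = m + 1 := ⟨n - 1, by have := card_pos.mpr ⟨v, hv⟩; omega⟩
  have hcard : #(V.erase v) = m := by rw [card_erase_of_mem hv, h, Nat.add_sub_cancel]
  have hcard' : ∀ w ∈ V.erase v, #((V.erase v).erase w) = m - 1 := fun w hw => by
    rw [card_erase_of_mem hw, hcard]
  rw [card_mdConfigsOn_succ hv, ih m (by omega) _ _ hcard,
    sum_congr rfl fun w hw => ih (m - 1) (by omega) _ _ (hcard' w hw), sum_const, hcard,
    smul_eq_mul]
  rcases m with _ | m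
  · simp [Nat.choose_eq_zero_of_lt (show 1 < 2 * (k + 1) by omega),
      Nat.choose_eq_zero_of_lt (show 0 < 2 * (k + 1) by omega)]
  · rw [show 2 * (k + 1) = 2 * k + 2 by ring, show 2 * k + 2 - 1 = 2 * k + 1 by omega,
      Nat.add_sub_cancel, choose_mul_doubleFactorial_add_two]

theorem IsMDConfig.two_mul_card_le {D : Finset (Sym2 (Fin N))} (hD : IsMDConfig N D) :
    2 * #D ≤ N := by
  have hpos : 0 < #(mdConfigsOn univ #D) :=
    card_pos.mpr ⟨D, mem_mdConfigsOn.mpr ⟨hD, rfl, fun _ _ _ _ => mem_univ _⟩⟩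
  rw [card_mdConfigsOn, card_univ, Fintype.card_fin] at hpos
  by_contra h
  rw [Nat.choose_eq_zero_of_lt (by omega), zero_mul] at hpos
  exact hpos.false

end Count

theorem integrable_pow_mul_exp_neg_mul_sq {b : ℝ} (hb : 0 < b) (n : ℕ) :
    Integrable fun x : ℝ => x ^ n * rexp (-b * x ^ 2) := by
  simpa using integrable_rpow_mul_exp_neg_mul_sq hb (s := n) (by linarith [n.cast_nonneg (α := ℝ)])

theorem integral_pow_two_mul_mul_exp_neg_mul_sq {b : ℝ} (hb : 0 < b) (k : ℕ) :
    ∫ x : ℝ, x ^ (2 * k) * rexp (-b * x ^ 2) = √(π / b) * (2 * k - 1)‼ / (2 * b) ^ k := by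
  have habs := integral_comp_abs (f := fun x : ℝ => x ^ (2 * k) * rexp (-b * x ^ 2))
  simp only [sq_abs, (even_two_mul k).pow_abs] at habs
  have hIoi : ∫ x in Set.Ioi (0 : ℝ), x ^ (2 * k) * rexp (-b * x ^ 2) =
      ∫ x in Set.Ioi (0 : ℝ), x ^ ((2 * k : ℕ) : ℝ) * rexp (-b * x ^ ((2 : ℕ) : ℝ)) := by
    simp only [rpow_natCast]
  rw [habs, hIoi, integral_rpow_mul_exp_neg_mul_rpow (by norm_num)
      (by linarith [(2 * k).cast_nonneg (α := ℝ)]) hb,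
    show (((2 * k : ℕ) : ℝ) + 1) / ((2 : ℕ) : ℝ) = k + 1 / 2 by push_cast; ring,
    Real.Gamma_nat_add_half,
    show -(((2 * k : ℕ) : ℝ) + 1) / ((2 : ℕ) : ℝ) = -(k : ℝ) + (-(1 / 2)) by push_cast; ring,
    rpow_add hb, rpow_neg hb.le, rpow_neg hb.le, rpow_natCast, ← sqrt_eq_rpow,
    sqrt_div' _ hb.le]
  field_simp
  ring

theorem integral_pow_two_mul_add_one_mul_exp_neg_mul_sq (b : ℝ) (k : ℕ) :
    ∫ x : ℝ, x ^ (2 * k + 1) * rexp (-b * x ^ 2) = 0 := by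
  have h := integral_neg_eq_self (fun x : ℝ => x ^ (2 * k + 1) * rexp (-b * x ^ 2)) volume
  simp only [(odd_two_mul_add_one k).neg_pow, neg_sq, neg_mul, integral_neg] at h ⊢
  linarith

theorem exp_neg_mul_sq_add_mul_eq {c : ℝ} (hc : c ≠ 0) (d y : ℝ) :
    rexp (-c * y ^ 2 + d * y) = rexp (d ^ 2 / (4 * c)) * rexp (-c * (y - d / (2 * c)) ^ 2) := by
  rw [← exp_add]
  congr 1
  field_simp
  ring

theorem integrable_exp_neg_mul_sq_add_mul {c : ℝ} (hc : 0 < c) (d : ℝ) :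
    Integrable fun y : ℝ => rexp (-c * y ^ 2 + d * y) := by
  simp_rw [exp_neg_mul_sq_add_mul_eq hc.ne']
  exact ((integrable_exp_neg_mul_sq hc).comp_sub_right _).const_mul _

theorem integral_exp_neg_mul_sq_add_mul {c : ℝ} (hc : 0 < c) (d : ℝ) :
    ∫ y : ℝ, rexp (-c * y ^ 2 + d * y) = √(π / c) * rexp (d ^ 2 / (4 * c)) := by
  simp_rw [exp_neg_mul_sq_add_mul_eq hc.ne']
  rw [integral_const_mul, integral_sub_right_eq_self (fun y => rexp (-c * y ^ 2)),
    integral_gaussian, mul_comm]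

theorem integral_finset_sum_mul_prod {α β ι : Type*} [MeasurableSpace α] [MeasurableSpace β]
    {μ : Measure α} {ν : Measure β} [SFinite μ] [SFinite ν] (s : Finset ι) (c : ι → ℝ)
    {f : ι → α → ℝ} {g : ι → β → ℝ} (hf : ∀ i ∈ s, Integrable (f i) μ)
    (hg : ∀ i ∈ s, Integrable (g i) ν) :
    ∫ p, ∑ i ∈ s, c i * (f i p.1 * g i p.2) ∂μ.prod ν =
      ∑ i ∈ s, c i * ((∫ x, f i x ∂μ) * ∫ y, g i y ∂ν) := by
  rw [integral_finsetSum s fun i hi => ((hf i hi).mul_prod (hg i hi)).const_mul (c i)]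
  exact sum_congr rfl fun i _ => by rw [integral_const_mul, integral_prod_mul]

theorem phi_pow_eq_sum (a b x y : ℝ) (N : ℕ) :
    Phi a b x y ^ N = ∑ j ∈ range (N + 1), (N.choose j : ℝ) *
      ((x ^ j * rexp (-(N / 2) * x ^ 2)) *
        (rexp ((N - j : ℕ) * b) * rexp (-(N * a / 2) * y ^ 2 + (N - j : ℕ) * a * y))) := by
  rw [Phi, mul_pow, add_pow, sum_mul]
  refine sum_congr rfl fun j _ => ?_
  rw [← exp_nat_mul, ← exp_nat_mul]
  have hexp : rexp ((N - j : ℕ) * (a * y + b)) * rexp (N * (-(x ^ 2 / 2) - a * y ^ 2 / 2)) =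
      rexp (-(N / 2) * x ^ 2) *
        (rexp ((N - j : ℕ) * b) * rexp (-(N * a / 2) * y ^ 2 + (N - j : ℕ) * a * y)) := by
    simp only [← exp_add]
    ring_nf
  linear_combination (x ^ j * N.choose j) * hexp

noncomputable def mdWeight (N : ℕ) (a b : ℝ) (k : ℕ) : ℝ :=
  ((N : ℝ) ^ k)⁻¹ * rexp (N * (a / 2 * (((N : ℝ) - 2 * k) / N) ^ 2 + b * (((N : ℝ) - 2 * k) / N)))

theorem inv_pow_card_mul_exp_eq_mdWeight (N : ℕ) (a b : ℝ) (D : Finset (Sym2 (Fin N))) :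
    ((N : ℝ) ^ #D)⁻¹ * rexp (N * (a / 2 * monomerDensity N D ^ 2 + b * monomerDensity N D)) =
      mdWeight N a b #D := rfl

theorem sum_filter_card_eq_mul {N : ℕ} [DecidablePred (IsMDConfig N)] (k : ℕ) (w : ℕ → ℝ) :
    ∑ D ∈ (univ.filter (IsMDConfig N)).filter (fun D => #D = k), w #D =
      ((N.choose (2 * k) * (2 * k - 1)‼ : ℕ) : ℝ) * w k := by
  have hfiber : (univ.filter (IsMDConfig N)).filter (fun D => #D = k) = mdConfigsOn univ k := by
    ext D
    simp [mem_mdConfigsOn]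
  rw [hfiber, sum_congr rfl fun D hD => by rw [(mem_mdConfigsOn.mp hD).2.1], sum_const,
    card_mdConfigsOn, card_univ, Fintype.card_fin, nsmul_eq_mul]

theorem integral_term_two_mul_eq {N : ℕ} (hN : 0 < N) {a : ℝ} (ha : 0 < a) (b : ℝ) (k : ℕ) :
    N * √a / (2 * π) * ((N.choose (2 * k) : ℝ) *
      ((∫ x, x ^ (2 * k) * rexp (-(N / 2) * x ^ 2)) *
        ∫ y, rexp ((N - 2 * k : ℕ) * b) * rexp (-(N * a / 2) * y ^ 2 + (N - 2 * k : ℕ) * a * y))) =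
      ((N.choose (2 * k) * (2 * k - 1)‼ : ℕ) : ℝ) * mdWeight N a b k := by
  rcases lt_or_ge N (2 * k) with h | h
  · simp [Nat.choose_eq_zero_of_lt h]
  have hN' : (0 : ℝ) < N := by exact_mod_cast hN
  have hpre : N * √a / (2 * π) * (√(π / (N / 2)) * √(π / (N * a / 2))) = 1 := by
    have hsq : π / (N / 2) * (π / (N * a / 2)) = (2 * π / (N * √a)) ^ 2 := by
      rw [div_pow, mul_pow, mul_pow, sq_sqrt ha.le]
      field_simp
    rw [← sqrt_mul (by positivity), hsq, sqrt_sq (by positivity)]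
    field_simp
  have hexp : rexp ((N - 2 * k : ℕ) * b) * rexp (((N - 2 * k : ℕ) * a) ^ 2 / (4 * (N * a / 2))) =
      rexp (N * (a / 2 * (((N : ℝ) - 2 * k) / N) ^ 2 + b * (((N : ℝ) - 2 * k) / N))) := by
    rw [← exp_add, Nat.cast_sub h]
    congr 1
    push_cast
    field_simp
    ring
  rw [integral_pow_two_mul_mul_exp_neg_mul_sq (by positivity), integral_const_mul,
    integral_exp_neg_mul_sq_add_mul (by positivity), mdWeight, ← hexp,
    show 2 * ((N : ℝ) / 2) = N by ring]
  push_cast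
  linear_combination (N.choose (2 * k) * (2 * k - 1)‼ * rexp ((N - 2 * k : ℕ) * b) *
    rexp (((N - 2 * k : ℕ) * a) ^ 2 / (4 * (N * a / 2))) / (N : ℝ) ^ k) * hpre

open Classical in
/-- Integral representation of the mean-field attractive monomer-dimer
partition function on the complete graph of size `N`. -/
theorem partition_integral_representation (N : ℕ) (hN : 1 ≤ N) (a b : ℝ)
    (ha : 0 < a) :
    (∑ D ∈ Finset.univ.filter (IsMDConfig N),
        ((N : ℝ) ^ D.card)⁻¹ *
          Real.exp (N * (a / 2 * monomerDensity N D ^ 2 + b * monomerDensity N D))) =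
      N * Real.sqrt a / (2 * Real.pi) *
        ∫ p : ℝ × ℝ, Phi a b p.1 p.2 ^ N := by
  simp_rw [inv_pow_card_mul_exp_eq_mdWeight, Measure.volume_eq_prod, phi_pow_eq_sum]
  rw [integral_finset_sum_mul_prod _ _
      (fun j _ => integrable_pow_mul_exp_neg_mul_sq (by positivity) j)
      (fun j _ => (integrable_exp_neg_mul_sq_add_mul (by positivity) _).const_mul _),
    mul_sum, ← sum_fiberwise_of_maps_to (g := fun D => 2 * #D)
      fun D hD => mem_range.mpr (Nat.lt_succ_of_le (mem_filter.mp hD).2.two_mul_card_le)]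
  -- Group configurations by their number `2 * #D` of covered vertices, the power of `x` they match.
  refine sum_congr rfl fun j _ => ?_
  obtain ⟨k, rfl | rfl⟩ := Nat.even_or_odd' j
  · rw [filter_congr fun D _ => (by omega : 2 * #D = 2 * k ↔ #D = k), sum_filter_card_eq_mul,
      integral_term_two_mul_eq hN ha]
  · rw [filter_false_of_mem fun D _ => (by omega : 2 * #D ≠ 2 * k + 1), sum_empty,
      integral_pow_two_mul_add_one_mul_exp_neg_mul_sq, zero_mul, mul_zero, mul_zero]
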